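/- Let (T, 𝒜) be a measurable space and ν a finite signed measure on T with total variation measure |ν|. Let d ≥ 1 be an integer, let σ be a probability measure on ℂ^d, and let α ≥ 2 and C > 0 be real numbers such that ∫_{ℂ^d} |log |⟨a, v⟩||^α dσ(a) ≤ C for every v ∈ ℂ^d with ‖v‖ = 1. Let ρ : T → ℂ^d be measurable with ‖ρ(x)‖ = 1 for every x ∈ T. Then ∫_{ℂ^d} ( ∫_T ∫_T |log |⟨a, ρ(x)⟩|| · |log |⟨a, ρ(y)⟩|| d|ν|(x) d|ν|(y) ) dσ(a) ≤ C^{2/α} (|ν|(T))². -/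

import Mathlib

/-!
With `F a x = |log ‖⟪a, ρ x⟫‖|` and `μ = |ν|`, the inner double integral is `(∫ F a dμ)²`.
Hölder on the finite measure `μ` bounds it by `(∫ F a ^ α dμ)^(2/α) μ(T)^(2 - 2/α)`; since
`2/α ≤ 1`, Jensen for the concave map `t ↦ t^(2/α)` on the probability space `σ` moves the power
outside the `σ`-integral, and after Tonelli the moment bound gives `∫∫ F ^ α ≤ C μ(T)`.
-/

open MeasureTheory
open scoped InnerProductSpace ENNReal

noncomputable instance (n : ℕ) : MeasurableSpace (EuclideanSpace ℂ (Fin n)) :=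
  MeasurableSpace.comap WithLp.ofLp MeasurableSpace.pi
instance (n : ℕ) : BorelSpace (EuclideanSpace ℂ (Fin n)) := PiLp.borelSpace 2 (X := fun _ : Fin n => ℂ)

section MixedNorm

variable {A T : Type*} [MeasurableSpace A] [MeasurableSpace T]

lemma lintegral_lintegral_mul_eq_sq {μ : Measure T} {f : T → ℝ≥0∞} (hf : AEMeasurable f μ) :
    ∫⁻ y, ∫⁻ x, f x * f y ∂μ ∂μ = (∫⁻ x, f x ∂μ) ^ 2 := by
  simp_rw [lintegral_mul_const'' _ hf]
  rw [lintegral_const_mul'' _ hf, sq]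

lemma lintegral_le_lintegral_rpow_mul_measure_univ {μ : Measure T} {f : T → ℝ≥0∞}
    (hf : AEMeasurable f μ) {p : ℝ} (hp : 1 ≤ p) :
    ∫⁻ x, f x ∂μ ≤ (∫⁻ x, f x ^ p ∂μ) ^ (1 / p) * μ Set.univ ^ (1 - 1 / p) := by
  simpa [eLpNorm'_eq_lintegral_enorm] using
    eLpNorm'_le_eLpNorm'_mul_rpow_measure_univ one_pos hp hf.aestronglyMeasurable

lemma lintegral_rpow_le_rpow_lintegral (σ : Measure A) [IsProbabilityMeasure σ]
    {g : A → ℝ≥0∞} (hg : AEMeasurable g σ) {r : ℝ} (hr₀ : 0 < r) (hr₁ : r ≤ 1) :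
    ∫⁻ a, g a ^ r ∂σ ≤ (∫⁻ a, g a ∂σ) ^ r := by
  have h := eLpNorm'_le_eLpNorm'_of_exponent_le hr₀ hr₁ σ hg.aestronglyMeasurable
  simp only [eLpNorm'_eq_lintegral_enorm, enorm_eq_self, ENNReal.rpow_one, div_one] at h
  calc ∫⁻ a, g a ^ r ∂σ = ((∫⁻ a, g a ^ r ∂σ) ^ (1 / r)) ^ r := by
        rw [← ENNReal.rpow_mul, one_div_mul_cancel hr₀.ne', ENNReal.rpow_one]
    _ ≤ (∫⁻ a, g a ∂σ) ^ r := by gcongr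

lemma lintegral_rpow_lintegral_le_of_forall_lintegral_rpow_le (σ : Measure A)
    [IsProbabilityMeasure σ] (μ : Measure T) [SFinite μ] {F : A → T → ℝ≥0∞}
    (hF : Measurable (Function.uncurry F)) {p k : ℝ} (hp : 1 ≤ p) (hk₀ : 0 < k) (hkp : k ≤ p)
    {M : ℝ≥0∞} (hM : ∀ x, ∫⁻ a, F a x ^ p ∂σ ≤ M) :
    ∫⁻ a, (∫⁻ x, F a x ∂μ) ^ k ∂σ ≤ M ^ (k / p) * μ Set.univ ^ k := by
  have hp₀ : 0 < p := one_pos.trans_le hp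
  have hkp₀ : 0 < k / p := div_pos hk₀ hp₀
  have hkp₁ : k / p ≤ k := div_le_self hk₀.le hp
  have hFp : Measurable fun a => ∫⁻ x, F a x ^ p ∂μ := (hF.pow_const p).lintegral_prod_right'
  calc ∫⁻ a, (∫⁻ x, F a x ∂μ) ^ k ∂σ
      ≤ ∫⁻ a, (∫⁻ x, F a x ^ p ∂μ) ^ (k / p) * μ Set.univ ^ (k - k / p) ∂σ := by
        refine lintegral_mono fun a => ?_
        calc (∫⁻ x, F a x ∂μ) ^ k
            ≤ ((∫⁻ x, F a x ^ p ∂μ) ^ (1 / p) * μ Set.univ ^ (1 - 1 / p)) ^ k := by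
              gcongr
              exact lintegral_le_lintegral_rpow_mul_measure_univ hF.of_uncurry_left.aemeasurable hp
          _ = (∫⁻ x, F a x ^ p ∂μ) ^ (k / p) * μ Set.univ ^ (k - k / p) := by
              rw [ENNReal.mul_rpow_of_nonneg _ _ hk₀.le, ← ENNReal.rpow_mul, ← ENNReal.rpow_mul]
              ring_nf
    _ = (∫⁻ a, (∫⁻ x, F a x ^ p ∂μ) ^ (k / p) ∂σ) * μ Set.univ ^ (k - k / p) :=
        lintegral_mul_const _ (hFp.pow_const _)
    _ ≤ (∫⁻ a, ∫⁻ x, F a x ^ p ∂μ ∂σ) ^ (k / p) * μ Set.univ ^ (k - k / p) := by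
        gcongr
        exact lintegral_rpow_le_rpow_lintegral σ hFp.aemeasurable hkp₀ ((div_le_one hp₀).2 hkp)
    _ = (∫⁻ x, ∫⁻ a, F a x ^ p ∂σ ∂μ) ^ (k / p) * μ Set.univ ^ (k - k / p) := by
        rw [lintegral_lintegral_swap (hF.pow_const p).aemeasurable]
    _ ≤ (∫⁻ _ : T, M ∂μ) ^ (k / p) * μ Set.univ ^ (k - k / p) := by
        gcongr with x
        exact hM x
    _ = M ^ (k / p) * μ Set.univ ^ k := by
        rw [lintegral_const, ENNReal.mul_rpow_of_nonneg _ _ hkp₀.le, mul_assoc,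
          ← ENNReal.rpow_add_of_nonneg _ _ hkp₀.le (sub_nonneg.2 hkp₁), add_sub_cancel]

end MixedNorm

lemma ENNReal.ofReal_rpow_le {x p : ℝ} (hp : 0 < p) :
    ENNReal.ofReal x ^ p ≤ ENNReal.ofReal (x ^ p) := by
  rcases le_total 0 x with hx | hx
  · rw [ENNReal.ofReal_rpow_of_nonneg hx hp.le]
  · rw [ENNReal.ofReal_of_nonpos hx, ENNReal.zero_rpow_of_pos hp]
    exact zero_le

theorem B3_term_estimate_general
    {T : Type*} [MeasurableSpace T] (ν : SignedMeasure T)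
    (d : ℕ)
    (σ : Measure (EuclideanSpace ℂ (Fin d))) [IsProbabilityMeasure σ]
    (α C : ℝ) (hα : 2 ≤ α)
    (hmom : ∀ v : EuclideanSpace ℂ (Fin d), ‖v‖ = 1 →
      ∫⁻ a, ENNReal.ofReal (|Real.log ‖⟪a, v⟫_ℂ‖| ^ α) ∂σ ≤ ENNReal.ofReal C)
    (ρ : T → EuclideanSpace ℂ (Fin d)) (hρ : Measurable ρ)
    (hρ1 : ∀ x, ‖ρ x‖ = 1) :
    ∫⁻ a, (∫⁻ y, (∫⁻ x, ENNReal.ofReal |Real.log ‖⟪a, ρ x⟫_ℂ‖| *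
            ENNReal.ofReal |Real.log ‖⟪a, ρ y⟫_ℂ‖| ∂ν.totalVariation) ∂ν.totalVariation) ∂σ ≤
      ENNReal.ofReal (C ^ (2 / α)) * (ν.totalVariation Set.univ) ^ 2 := by
  set F : EuclideanSpace ℂ (Fin d) → T → ℝ≥0∞ := fun a x =>
    ENNReal.ofReal |Real.log ‖⟪a, ρ x⟫_ℂ‖|
  have hF : Measurable (Function.uncurry F) := by
    have : Measurable fun p : EuclideanSpace ℂ (Fin d) × T => ⟪p.1, ρ p.2⟫_ℂ :=
      continuous_inner.measurable.comp (measurable_fst.prodMk (hρ.comp measurable_snd))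
    exact this.norm.log.abs.ennreal_ofReal
  have hmomF : ∀ x, ∫⁻ a, F a x ^ α ∂σ ≤ ENNReal.ofReal C := fun x => by
    simpa only [F, ENNReal.ofReal_rpow_of_nonneg (abs_nonneg _) (by linarith : (0 : ℝ) ≤ α)]
      using hmom (ρ x) (hρ1 x)
  calc ∫⁻ a, ∫⁻ y, ∫⁻ x, F a x * F a y ∂ν.totalVariation ∂ν.totalVariation ∂σ
      = ∫⁻ a, (∫⁻ x, F a x ∂ν.totalVariation) ^ (2 : ℝ) ∂σ := lintegral_congr fun a => by
        rw [lintegral_lintegral_mul_eq_sq hF.of_uncurry_left.aemeasurable, ENNReal.rpow_two]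
    _ ≤ ENNReal.ofReal C ^ (2 / α) * ν.totalVariation Set.univ ^ (2 : ℝ) :=
        lintegral_rpow_lintegral_le_of_forall_lintegral_rpow_le σ _ hF (by linarith) two_pos hα
          hmomF
    _ ≤ ENNReal.ofReal (C ^ (2 / α)) * ν.totalVariation Set.univ ^ 2 := by
        rw [ENNReal.rpow_two]
        gcongr
        exact ENNReal.ofReal_rpow_le (by positivity)

/-- The `B₃`-term estimate: under the logarithmic moment condition of exponent `α ≥ 2`,
`∫_{ℂ^d} ∫_T ∫_T |log|⟨a,ρ(x)⟩|| · |log|⟨a,ρ(y)⟩|| d|ν|(x) d|ν|(y) dσ(a) ≤ C^{2/α}(|ν|(T))²`. -/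
theorem B3_term_estimate
    {T : Type*} [MeasurableSpace T] (ν : SignedMeasure T)
    (d : ℕ) (hd : 1 ≤ d)
    (σ : Measure (EuclideanSpace ℂ (Fin d))) [IsProbabilityMeasure σ]
    (α C : ℝ) (hα : 2 ≤ α) (hC : 0 < C)
    (hmom : ∀ v : EuclideanSpace ℂ (Fin d), ‖v‖ = 1 →
      ∫⁻ a, ENNReal.ofReal (|Real.log ‖⟪a, v⟫_ℂ‖| ^ α) ∂σ ≤ ENNReal.ofReal C)
    (ρ : T → EuclideanSpace ℂ (Fin d)) (hρ : Measurable ρ)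
    (hρ1 : ∀ x, ‖ρ x‖ = 1) :
    ∫⁻ a, (∫⁻ y, (∫⁻ x, ENNReal.ofReal |Real.log ‖⟪a, ρ x⟫_ℂ‖| *
            ENNReal.ofReal |Real.log ‖⟪a, ρ y⟫_ℂ‖| ∂ν.totalVariation) ∂ν.totalVariation) ∂σ ≤
      ENNReal.ofReal (C ^ (2 / α)) * (ν.totalVariation Set.univ) ^ 2 :=
  B3_term_estimate_general ν d σ α C hα hmom ρ hρ hρ1
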